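/- If G is a finite perfect group, then the number of maximal subgroups of Gⁿ equals a·n + b·(n choose 2), where a is the number of maximal subgroups of G and b is the number of triples (S₁, S₂, φ) with S₁, S₂ ⊴ G, G/S₁ and G/S₂ non-abelian simple, and φ : G/S₁ → G/S₂ an isomorphism. -/

import Mathlib

universe u

open Subgroup Function QuotientGroup Pointwise

section Helpers

variable {P Q : Type*} [Group P] [Group Q]

lemma comap_ne_top {f : P →* Q} (hf : Surjective f) {A : Subgroup Q} (hA : A ≠ ⊤) :
    A.comap f ≠ ⊤ := by
  intro h
  apply hA
  have := Subgroup.map_comap_eq_self_of_surjective hf A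
  rw [h] at this
  rw [← this, Subgroup.map_top_of_surjective f hf]

lemma comap_isCoatom {f : P →* Q} (hf : Surjective f) {A : Subgroup Q} (hA : IsCoatom A) :
    IsCoatom (A.comap f) := by
  refine ⟨comap_ne_top hf hA.1, fun K hK => ?_⟩
  have hker : f.ker ≤ A.comap f := Subgroup.ker_le_comap f A
  have hKker : f.ker ≤ K := hker.trans hK.le
  have hcm : Subgroup.comap f (Subgroup.map f K) = K := by
    rw [Subgroup.comap_map_eq, sup_eq_left.2 hKker]
  have hAK : A < Subgroup.map f K := by
    constructor
    · rw [← Subgroup.map_comap_eq_self_of_surjective hf A]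
      exact Subgroup.map_mono hK.le
    · intro hle
      have : Subgroup.map f K ≤ A := by
        intro q hq
        exact hle (by
          obtain ⟨p, hp, rfl⟩ := hq
          exact ⟨p, hp, rfl⟩)
      have : K ≤ A.comap f := by
        rw [← hcm]; exact Subgroup.comap_mono this
      exact absurd (lt_of_lt_of_le hK this) (lt_irrefl _)
  have htop := hA.2 _ hAK
  rw [← hcm, htop, ← Subgroup.map_top_of_surjective f hf, Subgroup.comap_map_eq]
  simp

lemma coatom_eq_comap_map {f : P →* Q} (hf : Surjective f) {M : Subgroup P}
    (hM : IsCoatom M) (h : M.map f ≠ ⊤) :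
    M = (M.map f).comap f ∧ IsCoatom (M.map f) := by
  have h1 : M ≤ (M.map f).comap f := Subgroup.le_comap_map f M
  have h2 : (M.map f).comap f ≠ ⊤ := comap_ne_top hf h
  have heq : M = (M.map f).comap f := by
    rcases eq_or_lt_of_le h1 with h' | h'
    · exact h'
    · exact absurd (hM.2 _ h') h2
  refine ⟨heq, h, fun K hK => ?_⟩
  have : M < K.comap f := by
    rw [heq]
    exact lt_of_le_of_ne (Subgroup.comap_mono hK.le)
      (fun hc => hK.ne (Subgroup.comap_injective hf hc.symm).symm)
  have htop := hM.2 _ this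
  have := Subgroup.map_comap_eq_self_of_surjective hf K
  rw [← this, htop, Subgroup.map_top_of_surjective f hf]

lemma quotient_nontrivial {N : Subgroup P} [N.Normal] (h : N ≠ ⊤) :
    Nontrivial (P ⧸ N) := by
  obtain ⟨x, hx⟩ : ∃ x, x ∉ N := by
    by_contra hc
    push_neg at hc
    exact h ((Subgroup.eq_top_iff' N).2 hc)
  exact ⟨⟨(x : P ⧸ N), 1, fun hc => hx ((QuotientGroup.eq_one_iff x).1 hc)⟩⟩

open scoped commutatorElement in
lemma quotient_nonabelian {N : Subgroup P} [N.Normal] (hP : commutator P = ⊤) (h : N ≠ ⊤) :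
    ¬ ∀ a b : P ⧸ N, a * b = b * a := by
  intro hc
  apply h
  have : commutator P ≤ N := by
    rw [commutator_def, Subgroup.commutator_le]
    intro g₁ _ g₂ _
    rw [← QuotientGroup.eq_one_iff]
    have : ((⁅g₁, g₂⁆ : P) : P ⧸ N) = ⁅(g₁ : P ⧸ N), (g₂ : P ⧸ N)⁆ := by
      simp [commutatorElement_def]
    rw [this, commutatorElement_eq_one_iff_commute]
    exact hc _ _
  rw [hP] at this
  exact top_le_iff.1 this

lemma isSimpleGroup_quotient_of {N : Subgroup P} [N.Normal] (hN : N ≠ ⊤)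
    (h : ∀ K : Subgroup P, K.Normal → N ≤ K → K = N ∨ K = ⊤) :
    IsSimpleGroup (P ⧸ N) := by
  have : Nontrivial (P ⧸ N) := quotient_nontrivial hN
  refine ⟨fun H hH => ?_⟩
  have hns : Surjective (QuotientGroup.mk' N) := QuotientGroup.mk'_surjective N
  have hK : (H.comap (QuotientGroup.mk' N)).Normal := hH.comap _
  have hNK : N ≤ H.comap (QuotientGroup.mk' N) :=
    le_trans (le_of_eq (QuotientGroup.ker_mk' N).symm) (Subgroup.ker_le_comap _ _)
  rcases h _ hK hNK with h' | h'
  · left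
    have := Subgroup.map_comap_eq_self_of_surjective hns H
    rw [← this, h']
    ext q
    simp only [Subgroup.mem_map, Subgroup.mem_bot]
    constructor
    · rintro ⟨x, hx, rfl⟩
      exact (QuotientGroup.eq_one_iff x).2 hx
    · rintro rfl
      exact ⟨1, N.one_mem, map_one _⟩
  · right
    have := Subgroup.map_comap_eq_self_of_surjective hns H
    rw [← this, h', Subgroup.map_top_of_surjective _ hns]

end Helpers

section Graph

variable {Q₁ Q₂ : Type*} [Group Q₁] [Group Q₂]

lemma mem_graph' {G H : Type*} [Group G] [Group H] {f : G →* H} {x : G × H} :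
    x ∈ f.graph ↔ f x.1 = x.2 := Iff.rfl

lemma graph_ne_top [Nontrivial Q₁] (e : Q₁ ≃* Q₂) : e.toMonoidHom.graph ≠ ⊤ := by
  obtain ⟨q, hq⟩ := exists_ne (1 : Q₁)
  intro hc
  have : (q, (1 : Q₂)) ∈ e.toMonoidHom.graph := hc ▸ Subgroup.mem_top _
  rw [mem_graph'] at this
  exact hq (e.injective (by simpa using this))

lemma graph_isCoatom [IsSimpleGroup Q₁] (e : Q₁ ≃* Q₂) : IsCoatom e.toMonoidHom.graph := by
  have hnt : Nontrivial Q₂ := e.symm.surjective.nontrivial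
  have hs2 : IsSimpleGroup Q₂ :=
    IsSimpleGroup.isSimpleGroup_of_surjective e.toMonoidHom e.surjective
  refine ⟨graph_ne_top e, fun K hK => ?_⟩
  have hgr : ∀ a : Q₁, (a, e a) ∈ K := fun a => hK.le (mem_graph'.2 rfl)
  obtain ⟨⟨a, b⟩, hab, habn⟩ : ∃ x, x ∈ K ∧ x ∉ e.toMonoidHom.graph := by
    by_contra hc
    push_neg at hc
    exact hK.ne (le_antisymm hK.le hc)
  rw [mem_graph'] at habn
  have hsf : Surjective (Prod.fst ∘ K.subtype) := fun x => ⟨⟨(x, e x), hgr x⟩, rfl⟩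
  have hss : Surjective (Prod.snd ∘ K.subtype) := fun y =>
    ⟨⟨(e.symm y, e (e.symm y)), hgr _⟩, by simp⟩
  have hnorm : K.goursatSnd.Normal := Subgroup.normal_goursatSnd hss
  have hz : ((e a)⁻¹ * b) ∈ K.goursatSnd := by
    rw [Subgroup.mem_goursatSnd]
    have : ((a, e a) : Q₁ × Q₂)⁻¹ * (a, b) ∈ K := K.mul_mem (K.inv_mem (hgr a)) hab
    simpa using this
  have hzne : (e a)⁻¹ * b ≠ 1 := fun hc => habn (by
    have := congrArg (fun t => (e a) * t) hc
    simpa using this.symm)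
  have htop : K.goursatSnd = ⊤ := by
    rcases hnorm.eq_bot_or_eq_top with h | h
    · exact absurd (h ▸ hz) (by simpa using hzne)
    · exact h
  rw [eq_top_iff]
  rintro ⟨x, y⟩ -
  have h1 : ((1 : Q₁), (e x)⁻¹ * y) ∈ K := by
    rw [← Subgroup.mem_goursatSnd, htop]; trivial
  have := K.mul_mem (hgr x) h1
  simpa using this

end Graph

section Coord

variable {G : Type*} [Group G] {Q : Type*} [Group Q] {n : ℕ}

lemma conj_mulSingle (y : Fin n → G) (j : Fin n) (a : G) :
    y * Pi.mulSingle j a * y⁻¹ = Pi.mulSingle j (y j * a * (y j)⁻¹) := by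
  funext k
  by_cases h : k = j
  · subst h; simp
  · simp [Pi.mulSingle_eq_of_ne h, Pi.mulSingle_eq_of_ne h]

lemma map_eq_one_of_single (f : (Fin n → G) →* Q) (x : Fin n → G)
    (h : ∀ i, f (Pi.mulSingle i (x i)) = 1) : f x = 1 := by
  classical
  have hx := Finset.noncommProd_mulSingle x
  calc f x = f (Finset.univ.noncommProd (fun i => Pi.mulSingle i (x i)) fun i _ j _ _ =>
        Pi.mulSingle_apply_commute x i j) := by rw [hx]
    _ = Finset.univ.noncommProd (fun i => f (Pi.mulSingle i (x i))) _ :=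
        Finset.map_noncommProd _ _ _ _
    _ = 1 ^ Finset.univ.card := Finset.noncommProd_eq_pow_card _ _ _ _ fun i _ => h i
    _ = 1 := one_pow _

lemma exists_coord (f : (Fin n → G) →* Q) (hf : Surjective f) [IsSimpleGroup Q]
    (hna : ¬ ∀ a b : Q, a * b = b * a) :
    ∃ j : Fin n, ∀ x : Fin n → G, x j = 1 → f x = 1 := by
  obtain ⟨j, a, hja⟩ : ∃ j a, f (Pi.mulSingle j a) ≠ 1 := by
    by_contra hc
    push_neg at hc
    have hf1 : ∀ x, f x = 1 := fun x => map_eq_one_of_single f x (fun i => hc i (x i))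
    obtain ⟨q, hq⟩ := exists_ne (1 : Q)
    obtain ⟨x, rfl⟩ := hf q
    exact hq (hf1 x)
  have hR : ∀ q : Q, ∃ b, f (Pi.mulSingle j b) = q := by
    have hnorm : ((MonoidHom.mulSingle (fun _ : Fin n => G) j).range.map f).Normal := by
      have : (MonoidHom.mulSingle (fun _ : Fin n => G) j).range.Normal := by
        constructor
        rintro x ⟨c, rfl⟩ y
        exact ⟨y j * c * (y j)⁻¹, (conj_mulSingle y j c).symm⟩
      exact this.map f hf
    rcases hnorm.eq_bot_or_eq_top with h | h
    · exfalso
      apply hja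
      have : f (Pi.mulSingle j a) ∈ (MonoidHom.mulSingle (fun _ : Fin n => G) j).range.map f :=
        ⟨Pi.mulSingle j a, ⟨a, rfl⟩, rfl⟩
      rw [h] at this
      simpa using this
    · intro q
      have : q ∈ (MonoidHom.mulSingle (fun _ : Fin n => G) j).range.map f := by rw [h]; trivial
      obtain ⟨x, ⟨c, rfl⟩, rfl⟩ := this
      exact ⟨c, rfl⟩
  have hcen : ∀ (i : Fin n), i ≠ j → ∀ c : G, f (Pi.mulSingle i c) = 1 := by
    intro i hij c
    have hcomm : ∀ q : Q, Commute (f (Pi.mulSingle i c)) q := by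
      intro q
      obtain ⟨b, rfl⟩ := hR q
      have h1 : Commute (Pi.mulSingle (M := fun _ : Fin n => G) i c) (Pi.mulSingle j b) :=
        Pi.mulSingle_commute (f := fun _ : Fin n => G) hij c b
      exact h1.map f
    have hz : f (Pi.mulSingle i c) ∈ Subgroup.center Q := Subgroup.mem_center_iff.2 fun q =>
      (hcomm q).symm
    have hzbot : Subgroup.center Q = ⊥ := by
      rcases (Subgroup.center Q).normal_of_characteristic.eq_bot_or_eq_top with h | h
      · exact h
      · exfalso
        apply hna
        intro x y
        have : x ∈ Subgroup.center Q := by rw [h]; trivial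
        exact (Subgroup.mem_center_iff.1 this y).symm
    rw [hzbot] at hz
    simpa using hz
  refine ⟨j, fun x hxj => ?_⟩
  refine map_eq_one_of_single f x fun i => ?_
  by_cases h : i = j
  · subst h; rw [hxj]; simp
  · exact hcen i h (x i)

end Coord

/-- The quotient of `G` by a normal subgroup, with the subgroup packaged together with
its normality. -/
def NormalQuot {G : Type u} [Group G] (N : {N : Subgroup G // N.Normal}) : Type u :=
  G ⧸ N.1

noncomputable instance {G : Type u} [Group G] (N : {N : Subgroup G // N.Normal}) :
    Group (NormalQuot N) :=
  letI := N.2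
  inferInstanceAs (Group (G ⧸ N.1))

/-- Triples `(S₁, S₂, φ)` where `S₁, S₂ ⊴ G`, the quotients `G/S₁` and `G/S₂` are
non-abelian simple, and `φ : G/S₁ → G/S₂` is an isomorphism. -/
def SimpleQuotientTriple (G : Type u) [Group G] : Type u :=
  {t : Σ (S₁ S₂ : {N : Subgroup G // N.Normal}), NormalQuot S₁ ≃* NormalQuot S₂ //
    IsSimpleGroup (NormalQuot t.1) ∧ ¬ ∀ a b : NormalQuot t.1, a * b = b * a}

section Core

variable {G : Type u} [Group G]

/-- The quotient map onto `NormalQuot S`. -/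
def mkQ (S : {N : Subgroup G // N.Normal}) : G →* NormalQuot S :=
  letI := S.2
  QuotientGroup.mk' S.1

lemma mkQ_surjective (S : {N : Subgroup G // N.Normal}) : Surjective (mkQ S) := by
  letI := S.2
  exact QuotientGroup.mk'_surjective S.1

lemma mkQ_eq_one_iff (S : {N : Subgroup G // N.Normal}) (g : G) :
    mkQ S g = 1 ↔ g ∈ S.1 := by
  letI := S.2
  exact QuotientGroup.eq_one_iff g

variable {n : ℕ}

/-- The map cutting out the diagonal subgroup. -/
noncomputable def diagHom (t : SimpleQuotientTriple G) (j : Fin n) :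
    (G × (Fin n → G)) →* NormalQuot t.1.1 × NormalQuot t.1.2.1 :=
  ((mkQ t.1.1).comp (MonoidHom.fst _ _)).prod
    ((mkQ t.1.2.1).comp ((Pi.evalMonoidHom (fun _ => G) j).comp (MonoidHom.snd _ _)))

lemma diagHom_surjective (t : SimpleQuotientTriple G) (j : Fin n) :
    Surjective (diagHom t j) := by
  rintro ⟨q₁, q₂⟩
  obtain ⟨a, ha⟩ := mkQ_surjective t.1.1 q₁
  obtain ⟨h, hh⟩ := mkQ_surjective t.1.2.1 q₂
  exact ⟨(a, fun _ => h), by simp [diagHom, ha, hh]⟩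

/-- The diagonal subgroup of `G × Gⁿ` associated to a simple quotient triple and an index. -/
noncomputable def diagSub (t : SimpleQuotientTriple G) (j : Fin n) : Subgroup (G × (Fin n → G)) :=
  (t.1.2.2.toMonoidHom.graph).comap (diagHom t j)

lemma mem_diagSub {t : SimpleQuotientTriple G} {j : Fin n} {p : G × (Fin n → G)} :
    p ∈ diagSub t j ↔ t.1.2.2 (mkQ t.1.1 p.1) = mkQ t.1.2.1 (p.2 j) := Iff.rfl

lemma diagSub_isCoatom (t : SimpleQuotientTriple G) (j : Fin n) : IsCoatom (diagSub t j) := by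
  haveI : IsSimpleGroup (NormalQuot t.1.1) := t.2.1
  exact comap_isCoatom (diagHom_surjective t j) (graph_isCoatom t.1.2.2)

lemma snd_ne_top (t : SimpleQuotientTriple G) : t.1.2.1.1 ≠ ⊤ := by
  haveI : IsSimpleGroup (NormalQuot t.1.1) := t.2.1
  haveI : Nontrivial (NormalQuot t.1.2.1) := t.1.2.2.symm.surjective.nontrivial
  obtain ⟨q, hq⟩ := exists_ne (1 : NormalQuot t.1.2.1)
  obtain ⟨h, rfl⟩ := mkQ_surjective t.1.2.1 q
  intro hc
  exact hq ((mkQ_eq_one_iff t.1.2.1 h).2 (by rw [hc]; trivial))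

lemma fst_ne_top (t : SimpleQuotientTriple G) : t.1.1.1 ≠ ⊤ := by
  haveI : IsSimpleGroup (NormalQuot t.1.1) := t.2.1
  obtain ⟨q, hq⟩ := exists_ne (1 : NormalQuot t.1.1)
  obtain ⟨h, rfl⟩ := mkQ_surjective t.1.1 q
  intro hc
  exact hq ((mkQ_eq_one_iff t.1.1 h).2 (by rw [hc]; trivial))

lemma diagSub_map_fst (t : SimpleQuotientTriple G) (j : Fin n) :
    (diagSub t j).map (MonoidHom.fst _ _) = ⊤ := by
  rw [Subgroup.eq_top_iff']
  intro g
  obtain ⟨h, hh⟩ := mkQ_surjective t.1.2.1 (t.1.2.2 (mkQ t.1.1 g))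
  exact ⟨(g, fun _ => h), mem_diagSub.2 (by simpa using hh.symm), rfl⟩

lemma diagSub_map_snd (t : SimpleQuotientTriple G) (j : Fin n) :
    (diagSub t j).map (MonoidHom.snd _ _) = ⊤ := by
  rw [Subgroup.eq_top_iff']
  intro b
  obtain ⟨a, ha⟩ := mkQ_surjective t.1.1 (t.1.2.2.symm (mkQ t.1.2.1 (b j)))
  refine ⟨(a, b), mem_diagSub.2 ?_, rfl⟩
  rw [ha]
  simp

lemma mem_diagSub_left {t : SimpleQuotientTriple G} {j : Fin n} {a : G} :
    ((a, (1 : Fin n → G)) ∈ diagSub t j) ↔ a ∈ t.1.1.1 := by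
  rw [mem_diagSub]
  constructor
  · intro h
    rw [← mkQ_eq_one_iff t.1.1]
    apply t.1.2.2.injective
    simpa using h
  · intro h
    have : mkQ t.1.1 a = 1 := (mkQ_eq_one_iff t.1.1 a).2 h
    rw [this]
    simp

lemma mem_diagSub_right {t : SimpleQuotientTriple G} {j : Fin n} {b : Fin n → G} :
    (((1 : G), b) ∈ diagSub t j) ↔ b j ∈ t.1.2.1.1 := by
  rw [mem_diagSub]
  constructor
  · intro h
    rw [← mkQ_eq_one_iff t.1.2.1]
    simpa using h.symm
  · intro h
    have : mkQ t.1.2.1 (b j) = 1 := (mkQ_eq_one_iff t.1.2.1 _).2 h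
    simp [this]

lemma sqt_eq (t t' : SimpleQuotientTriple G)
    (h1 : t.1.1.1 = t'.1.1.1) (h2 : t.1.2.1.1 = t'.1.2.1.1)
    (h3 : ∀ g h : G, (t.1.2.2 (mkQ t.1.1 g) = mkQ t.1.2.1 h) ↔
      (t'.1.2.2 (mkQ t'.1.1 g) = mkQ t'.1.2.1 h)) : t = t' := by
  obtain ⟨⟨S₁, S₂, φ⟩, hp⟩ := t
  obtain ⟨⟨S₁', S₂', φ'⟩, hp'⟩ := t'
  dsimp at h1 h2 h3
  have e1 : S₁ = S₁' := Subtype.ext h1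
  subst e1
  have e2 : S₂ = S₂' := Subtype.ext h2
  subst e2
  have : φ = φ' := by
    ext q
    obtain ⟨g, rfl⟩ := mkQ_surjective S₁ q
    obtain ⟨h, hh⟩ := mkQ_surjective S₂ (φ (mkQ S₁ g))
    rw [← hh, ← ((h3 g h).1 hh.symm)]
  subst this
  rfl

end Core

section Classify

variable {G : Type u} [Group G] {n : ℕ}

lemma step_classify (hG : commutator G = ⊤) (M : Subgroup (G × (Fin n → G)))
    (hM : IsCoatom M) (h1 : M.map (MonoidHom.fst _ _) = ⊤)
    (h2 : M.map (MonoidHom.snd _ _) = ⊤) :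
    ∃ (t : SimpleQuotientTriple G) (j : Fin n), diagSub t j = M := by
  set B := Fin n → G with hB
  have hs1 : Surjective (Prod.fst ∘ M.subtype) := by
    intro g
    have : g ∈ M.map (MonoidHom.fst G B) := by rw [h1]; trivial
    obtain ⟨x, hx, rfl⟩ := this
    exact ⟨⟨x, hx⟩, rfl⟩
  have hs2 : Surjective (Prod.snd ∘ M.subtype) := by
    intro b
    have : b ∈ M.map (MonoidHom.snd G B) := by rw [h2]; trivial
    obtain ⟨x, hx, rfl⟩ := this
    exact ⟨⟨x, hx⟩, rfl⟩
  haveI nf : M.goursatFst.Normal := Subgroup.normal_goursatFst hs1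
  haveI ns : M.goursatSnd.Normal := Subgroup.normal_goursatSnd hs2
  obtain ⟨e, he⟩ := Subgroup.goursat_surjective hs1 hs2
  -- membership characterisation
  have hmem : ∀ (a : G) (b : B),
      ((a, b) ∈ M) ↔ e ((a : G ⧸ M.goursatFst)) = (b : B ⧸ M.goursatSnd) := by
    intro a b
    constructor
    · intro hab
      have : ((a : G ⧸ M.goursatFst), (b : B ⧸ M.goursatSnd)) ∈
          (((QuotientGroup.mk' _).prodMap (QuotientGroup.mk' _)).comp M.subtype).range :=
        ⟨⟨(a, b), hab⟩, rfl⟩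
      rw [he] at this
      exact this
    · intro hab
      have hmem2 : ((a : G ⧸ M.goursatFst), (b : B ⧸ M.goursatSnd)) ∈ e.toMonoidHom.graph :=
        mem_graph'.2 hab
      rw [← he] at hmem2
      obtain ⟨⟨⟨x, y⟩, hxy⟩, hx⟩ := hmem2
      simp only [MonoidHom.comp_apply, MonoidHom.coe_prodMap, Prod.map_apply, Prod.mk.injEq,
        Subgroup.coe_subtype, QuotientGroup.coe_mk'] at hx
      obtain ⟨hx1, hx2⟩ := hx
      have hfa : x⁻¹ * a ∈ M.goursatFst := QuotientGroup.eq.1 hx1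
      have hfb : y⁻¹ * b ∈ M.goursatSnd := QuotientGroup.eq.1 hx2
      have hprod : ((a, b) : G × B) = (x, y) * ((x⁻¹ * a, 1) * (1, y⁻¹ * b)) := by
        simp [Prod.ext_iff, mul_assoc]
      rw [hprod]
      exact M.mul_mem hxy (M.mul_mem (Subgroup.mem_goursatFst.1 hfa)
        (Subgroup.mem_goursatSnd.1 hfb))
  -- goursatFst is not everything
  have hN1top : M.goursatFst ≠ ⊤ := by
    intro h
    apply hM.1
    have hker : MonoidHom.ker (MonoidHom.snd G B) ≤ M := by
      rintro ⟨a, b⟩ hab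
      have hb : b = 1 := hab
      subst hb
      exact Subgroup.mem_goursatFst.1 (h ▸ Subgroup.mem_top a)
    have hcm : Subgroup.comap (MonoidHom.snd G B) (M.map (MonoidHom.snd G B)) = M := by
      rw [Subgroup.comap_map_eq, sup_eq_left.2 hker]
    rw [← hcm, h2, Subgroup.comap_top]
  -- simplicity of the first quotient
  have hclaim : ∀ K : Subgroup G, K.Normal → M.goursatFst ≤ K → K = M.goursatFst ∨ K = ⊤ := by
    intro K hKn hNK
    let K' : Subgroup (G × B) := K.prod ⊥
    haveI hK'n : K'.Normal := by
      constructor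
      rintro ⟨k, b⟩ hkb ⟨a, y⟩
      obtain ⟨hk, hb⟩ := Subgroup.mem_prod.1 hkb
      have hb1 : b = 1 := hb
      subst hb1
      refine Subgroup.mem_prod.2 ⟨hKn.conj_mem k hk a, ?_⟩
      simp
    rcases eq_or_lt_of_le (le_sup_left : M ≤ M ⊔ K') with hsup | hsup
    · left
      refine le_antisymm (fun k hk => ?_) hNK
      have : ((k, 1) : G × B) ∈ M ⊔ K' := Subgroup.mem_sup_right (Subgroup.mem_prod.2 ⟨hk, rfl⟩)
      rw [← hsup] at this
      exact Subgroup.mem_goursatFst.2 this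
    · right
      have htop := hM.2 _ hsup
      rw [Subgroup.eq_top_iff']
      intro a
      have hmem3 : ((a, 1) : G × B) ∈ M ⊔ K' := by rw [htop]; trivial
      have : ((a, 1) : G × B) ∈ (M : Set (G × B)) * (K' : Set (G × B)) := by
        rw [← Subgroup.mul_normal M K']
        exact_mod_cast hmem3
      obtain ⟨m, hm, k, hk, hmk⟩ := this
      obtain ⟨hk1, hk2⟩ := Subgroup.mem_prod.1 hk
      have hk2' : k.2 = 1 := hk2
      have hm2 : m.2 = 1 := by
        have := congrArg Prod.snd hmk
        simpa [hk2'] using this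
      have hm1 : m.1 ∈ M.goursatFst := by
        apply Subgroup.mem_goursatFst.2
        have : (m.1, m.2) ∈ M := hm
        rwa [hm2] at this
      have ha : a = m.1 * k.1 := by
        have := congrArg Prod.fst hmk
        simpa using this.symm
      rw [ha]
      exact K.mul_mem (hNK hm1) hk1
  haveI hsQ1 : IsSimpleGroup (G ⧸ M.goursatFst) := isSimpleGroup_quotient_of hN1top hclaim
  have hna1 : ¬ ∀ a b : G ⧸ M.goursatFst, a * b = b * a := quotient_nonabelian hG hN1top
  -- transport to the second quotient
  haveI hnt2 : Nontrivial (B ⧸ M.goursatSnd) := e.symm.toEquiv.nontrivial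
  haveI hsQ2 : IsSimpleGroup (B ⧸ M.goursatSnd) :=
    IsSimpleGroup.isSimpleGroup_of_surjective e.toMonoidHom e.surjective
  have hna2 : ¬ ∀ a b : B ⧸ M.goursatSnd, a * b = b * a := by
    intro hc
    apply hna1
    intro a b
    apply e.injective
    rw [map_mul, map_mul, hc]
  -- find the coordinate
  obtain ⟨j, hj⟩ := exists_coord (QuotientGroup.mk' M.goursatSnd)
    (QuotientGroup.mk'_surjective _) hna2
  have hj' : ∀ x : B, x j = 1 → x ∈ M.goursatSnd := by
    intro x hx
    exact (QuotientGroup.eq_one_iff x).1 (hj x hx)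
  -- the subgroup of G at coordinate j
  have hevalsurj : Surjective (Pi.evalMonoidHom (fun _ : Fin n => G) j) :=
    fun g => ⟨fun _ => g, rfl⟩
  set T : Subgroup G := M.goursatSnd.map (Pi.evalMonoidHom (fun _ : Fin n => G) j) with hT
  haveI hTn : T.Normal := ns.map _ hevalsurj
  have hmemT : ∀ x : B, x ∈ M.goursatSnd ↔ x j ∈ T := by
    intro x
    constructor
    · intro h
      exact ⟨x, h, rfl⟩
    · rintro ⟨y, hy, hyj⟩
      have hx : x = y * (y⁻¹ * x) := by group
      rw [hx]
      refine M.goursatSnd.mul_mem hy (hj' _ ?_)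
      show (y j)⁻¹ * x j = 1
      simp only [Pi.evalMonoidHom_apply] at hyj
      rw [hyj]
      group
  set f2 : B →* G ⧸ T := (QuotientGroup.mk' T).comp (Pi.evalMonoidHom (fun _ : Fin n => G) j)
    with hf2
  have hf2surj : Surjective f2 := (QuotientGroup.mk'_surjective T).comp hevalsurj
  have hker2 : M.goursatSnd = MonoidHom.ker f2 := by
    ext x
    rw [MonoidHom.mem_ker]
    show x ∈ M.goursatSnd ↔ (QuotientGroup.mk' T) (x j) = 1
    rw [hmemT x]
    exact (QuotientGroup.eq_one_iff _).symm
  let ψ : (B ⧸ M.goursatSnd) ≃* G ⧸ T :=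
    (QuotientGroup.quotientMulEquivOfEq hker2).trans
      (QuotientGroup.quotientKerEquivOfSurjective f2 hf2surj)
  have hψ : ∀ x : B, ψ ((x : B ⧸ M.goursatSnd)) = ((x j : G) : G ⧸ T) := by
    intro x
    show (QuotientGroup.quotientKerEquivOfSurjective f2 hf2surj)
        ((QuotientGroup.quotientMulEquivOfEq hker2) ((x : B ⧸ M.goursatSnd))) = _
    rw [QuotientGroup.quotientMulEquivOfEq_mk]
    rfl
  -- assemble the triple
  refine ⟨⟨⟨⟨M.goursatFst, nf⟩, ⟨T, hTn⟩, e.trans ψ⟩, hsQ1, hna1⟩, j, ?_⟩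
  ext ⟨a, b⟩
  refine mem_diagSub.trans ?_
  show (e.trans ψ) ((a : G ⧸ M.goursatFst)) = ((b j : G) : G ⧸ T) ↔ _
  rw [hmem a b]
  constructor
  · intro h
    apply ψ.injective
    rw [hψ b]
    exact h
  · intro h
    show ψ (e ((a : G ⧸ M.goursatFst))) = _
    rw [h, hψ b]

end Classify

section Count

variable {G : Type u} [Group G]

instance finSubgroup {X : Type*} [Group X] [Finite X] : Finite (Subgroup X) :=
  Finite.of_injective (fun H => (H : Set X)) SetLike.coe_injective

instance finNormalQuot [Finite G] (S : {N : Subgroup G // N.Normal}) :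
    Finite (NormalQuot S) :=
  Quotient.finite _

instance finMulEquiv [Finite G] (S₁ S₂ : {N : Subgroup G // N.Normal}) :
    Finite (NormalQuot S₁ ≃* NormalQuot S₂) :=
  Finite.of_injective (fun e => (e : NormalQuot S₁ → NormalQuot S₂)) DFunLike.coe_injective

instance finSQT [Finite G] : Finite (SimpleQuotientTriple G) := by
  unfold SimpleQuotientTriple
  infer_instance

variable {n : ℕ}

lemma fstSurj : Surjective ⇑(MonoidHom.fst G (Fin n → G)) := fun g => ⟨(g, 1), rfl⟩

lemma sndSurj : Surjective ⇑(MonoidHom.snd G (Fin n → G)) := fun b => ⟨(1, b), rfl⟩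

lemma map_fst_comap_snd (B' : Subgroup (Fin n → G)) :
    (B'.comap (MonoidHom.snd G _)).map (MonoidHom.fst G _) = ⊤ := by
  rw [Subgroup.eq_top_iff']
  intro g
  exact ⟨(g, 1), B'.one_mem, rfl⟩

lemma map_snd_comap_fst (A' : Subgroup G) :
    (A'.comap (MonoidHom.fst G (Fin n → G))).map (MonoidHom.snd G _) = ⊤ := by
  rw [Subgroup.eq_top_iff']
  intro b
  exact ⟨(1, b), A'.one_mem, rfl⟩

/-- The classification map for maximal subgroups of `G × Gⁿ`. -/
noncomputable def FF (G : Type u) [Group G] (n : ℕ) :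
    ({A' : Subgroup G // IsCoatom A'} ⊕
      ({B' : Subgroup (Fin n → G) // IsCoatom B'} ⊕ (SimpleQuotientTriple G × Fin n))) →
      {M : Subgroup (G × (Fin n → G)) // IsCoatom M}
  | Sum.inl A' => ⟨A'.1.comap (MonoidHom.fst _ _), comap_isCoatom fstSurj A'.2⟩
  | Sum.inr (Sum.inl B') => ⟨B'.1.comap (MonoidHom.snd _ _), comap_isCoatom sndSurj B'.2⟩
  | Sum.inr (Sum.inr (t, j)) => ⟨diagSub t j, diagSub_isCoatom t j⟩

lemma FF_map_fst (G : Type u) [Group G] (n : ℕ) :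
    ∀ t : SimpleQuotientTriple G, ∀ j : Fin n,
      (diagSub t j).map (MonoidHom.fst G (Fin n → G)) = ⊤ := fun t j => diagSub_map_fst t j

lemma FF_injective (G : Type u) [Group G] (n : ℕ) : Injective (FF G n) := by
  rintro (A | B | ⟨t, j⟩) (A' | B' | ⟨t', j'⟩) h <;>
    rw [Subtype.ext_iff] at h <;> dsimp [FF] at h
  -- inl / inl
  · exact congrArg Sum.inl (Subtype.ext (Subgroup.comap_injective fstSurj h))
  -- inl / inr inl
  · exfalso
    apply A.2.1
    have := congrArg (Subgroup.map (MonoidHom.fst G (Fin n → G))) h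
    rwa [Subgroup.map_comap_eq_self_of_surjective fstSurj, map_fst_comap_snd] at this
  -- inl / inr inr
  · exfalso
    apply A.2.1
    have := congrArg (Subgroup.map (MonoidHom.fst G (Fin n → G))) h
    rwa [Subgroup.map_comap_eq_self_of_surjective fstSurj, diagSub_map_fst] at this
  -- inr inl / inl
  · exfalso
    apply A'.2.1
    have := congrArg (Subgroup.map (MonoidHom.fst G (Fin n → G))) h.symm
    rwa [Subgroup.map_comap_eq_self_of_surjective fstSurj, map_fst_comap_snd] at this
  -- inr inl / inr inl
  · exact congrArg (Sum.inr ∘ Sum.inl) (Subtype.ext (Subgroup.comap_injective sndSurj h))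
  -- inr inl / inr inr
  · exfalso
    apply B.2.1
    have := congrArg (Subgroup.map (MonoidHom.snd G (Fin n → G))) h
    rwa [Subgroup.map_comap_eq_self_of_surjective sndSurj, diagSub_map_snd] at this
  -- inr inr / inl
  · exfalso
    apply A'.2.1
    have := congrArg (Subgroup.map (MonoidHom.fst G (Fin n → G))) h.symm
    rwa [Subgroup.map_comap_eq_self_of_surjective fstSurj, diagSub_map_fst] at this
  -- inr inr / inr inl
  · exfalso
    apply B'.2.1
    have := congrArg (Subgroup.map (MonoidHom.snd G (Fin n → G))) h.symm
    rwa [Subgroup.map_comap_eq_self_of_surjective sndSurj, diagSub_map_snd] at this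
  -- inr inr / inr inr
  · have hjj : j = j' := by
      by_contra hne
      apply snd_ne_top t
      rw [Subgroup.eq_top_iff']
      intro g
      have hm : ((1 : G), Pi.mulSingle j g) ∈ diagSub t' j' := by
        apply mem_diagSub_right.2
        rw [Pi.mulSingle_eq_of_ne (fun hq : j' = j => hne hq.symm)]
        exact (t'.1.2.1.1).one_mem
      rw [← h] at hm
      have := mem_diagSub_right.1 hm
      rwa [Pi.mulSingle_eq_same] at this
    subst hjj
    have hS2 : t.1.2.1.1 = t'.1.2.1.1 := by
      ext g
      constructor
      · intro hg
        have : ((1 : G), (fun _ => g : Fin n → G)) ∈ diagSub t j := mem_diagSub_right.2 hg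
        rw [h] at this
        exact mem_diagSub_right.1 this
      · intro hg
        have : ((1 : G), (fun _ => g : Fin n → G)) ∈ diagSub t' j := mem_diagSub_right.2 hg
        rw [← h] at this
        exact mem_diagSub_right.1 this
    have hS1 : t.1.1.1 = t'.1.1.1 := by
      ext a
      constructor
      · intro ha
        have : (a, (1 : Fin n → G)) ∈ diagSub t j := mem_diagSub_left.2 ha
        rw [h] at this
        exact mem_diagSub_left.1 this
      · intro ha
        have : (a, (1 : Fin n → G)) ∈ diagSub t' j := mem_diagSub_left.2 ha
        rw [← h] at this
        exact mem_diagSub_left.1 this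
    have hphi : ∀ g hh : G, (t.1.2.2 (mkQ t.1.1 g) = mkQ t.1.2.1 hh) ↔
        (t'.1.2.2 (mkQ t'.1.1 g) = mkQ t'.1.2.1 hh) := by
      intro g hh
      have h1 : ((g, (fun _ => hh : Fin n → G)) ∈ diagSub t j) ↔
          (t.1.2.2 (mkQ t.1.1 g) = mkQ t.1.2.1 hh) := mem_diagSub
      have h2 : ((g, (fun _ => hh : Fin n → G)) ∈ diagSub t' j) ↔
          (t'.1.2.2 (mkQ t'.1.1 g) = mkQ t'.1.2.1 hh) := mem_diagSub
      rw [← h1, ← h2, h]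
    have := sqt_eq t t' hS1 hS2 hphi
    subst this
    rfl

lemma FF_surjective {G : Type u} [Group G] (hG : commutator G = ⊤) (n : ℕ) :
    Surjective (FF G n) := by
  rintro ⟨M, hM⟩
  by_cases hc1 : M.map (MonoidHom.fst G (Fin n → G)) = ⊤
  · by_cases hc2 : M.map (MonoidHom.snd G (Fin n → G)) = ⊤
    · obtain ⟨t, j, hdiag⟩ := step_classify hG M hM hc1 hc2
      exact ⟨Sum.inr (Sum.inr (t, j)), Subtype.ext hdiag⟩
    · obtain ⟨heq, hco⟩ := coatom_eq_comap_map sndSurj hM hc2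
      exact ⟨Sum.inr (Sum.inl ⟨M.map (MonoidHom.snd G (Fin n → G)), hco⟩), Subtype.ext heq.symm⟩
  · obtain ⟨heq, hco⟩ := coatom_eq_comap_map fstSurj hM hc1
    exact ⟨Sum.inl ⟨M.map (MonoidHom.fst G (Fin n → G)), hco⟩, Subtype.ext heq.symm⟩

lemma step_count {G : Type u} [Group G] [Finite G] (hG : commutator G = ⊤) (n : ℕ) :
    Nat.card {M : Subgroup (G × (Fin n → G)) // IsCoatom M} =
      Nat.card {M : Subgroup G // IsCoatom M} +
        (Nat.card {M : Subgroup (Fin n → G) // IsCoatom M} +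
          Nat.card (SimpleQuotientTriple G) * n) := by
  have hbij : Function.Bijective (FF G n) := ⟨FF_injective G n, FF_surjective hG n⟩
  rw [← Nat.card_eq_of_bijective _ hbij, Nat.card_sum, Nat.card_sum, Nat.card_prod]
  simp [Nat.card_eq_fintype_card]

end Count

section Final

variable {G : Type u} [Group G]

/-- The multiplicative equivalence `G^(n+1) ≃* G × G^n`. -/
def piSuccMulEquiv (n : ℕ) (G : Type u) [Group G] :
    (Fin (n + 1) → G) ≃* G × (Fin n → G) :=
  { (Fin.consEquiv fun _ => G).symm with
    map_mul' := fun _ _ => rfl }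

lemma card_coatoms_congr {X Y : Type u} [Group X] [Group Y] (e : X ≃* Y) :
    Nat.card {M : Subgroup X // IsCoatom M} = Nat.card {M : Subgroup Y // IsCoatom M} := by
  refine Nat.card_congr (Equiv.subtypeEquiv (MulEquiv.mapSubgroup e).toEquiv fun M => ?_)
  exact ((MulEquiv.mapSubgroup e).isCoatom_iff M).symm

theorem stmt15' {G : Type u} [Group G] [Finite G] (hG : commutator G = ⊤) (n : ℕ) :
    Nat.card {M : Subgroup (Fin n → G) // IsCoatom M} =
      Nat.card {M : Subgroup G // IsCoatom M} * n +
        Nat.card (SimpleQuotientTriple G) * n.choose 2 := by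
  induction n with
  | zero =>
    haveI : IsEmpty {M : Subgroup (Fin 0 → G) // IsCoatom M} := by
      constructor
      rintro ⟨M, hM⟩
      apply hM.1
      rw [Subgroup.eq_top_iff']
      intro x
      rw [Subsingleton.elim x 1]
      exact M.one_mem
    simp [Nat.card_of_isEmpty]
  | succ n ih =>
    rw [card_coatoms_congr (piSuccMulEquiv n G), step_count hG n, ih,
      Nat.choose_succ_succ n 1, Nat.choose_one_right]
    ring

end Final

/-- For a finite perfect group `G`, the number of maximal subgroups of `Gⁿ` is
`a·n + b·(n choose 2)`, where `a` is the number of maximal subgroups of `G` and `b` is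
the number of triples `(S₁, S₂, φ)` with `G/S₁`, `G/S₂` non-abelian simple and
`φ : G/S₁ ≃ G/S₂`. -/
theorem stmt15 {G : Type u} [Group G] [Finite G] (hG : commutator G = ⊤) (n : ℕ) :
    Nat.card {M : Subgroup (Fin n → G) // IsCoatom M} =
      Nat.card {M : Subgroup G // IsCoatom M} * n +
        Nat.card (SimpleQuotientTriple G) * n.choose 2 := by
  exact stmt15' hG n
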